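/- Assume the critical value is 0. Let y ∈ A and i ∈ {1,…,m}. Then every critical subsolution v ∈ H(0) satisfies v(y) = Φ_{·,i}(y,y) + v_i(y)𝟙, i.e. v_k(y) = Φ_{k,i}(y,y) + v_i(y) for every k ∈ {1,…,m}. In particular, for any two critical subsolutions v, w ∈ H(0), the difference v(y) − w(y) belongs to ℝ𝟙. -/

import Mathlib

open Filter MeasureTheory

noncomputable section

/-- We model the flat torus `T^N = ℝ^N/ℤ^N` by working with `ℤ^N`-periodic
functions on `Euc N = ℝ^N` (with the Euclidean structure). -/
abbrev Euc (N : ℕ) := EuclideanSpace ℝ (Fin N)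

/-- The vector of `ℝ^N` with integer coordinates `k`. -/
def intVec {N : ℕ} (k : Fin N → ℤ) : Euc N := WithLp.toLp 2 (fun i => (k i : ℝ))

/-- A function on `ℝ^N` is `ℤ^N`-periodic, i.e. descends to the torus. -/
def ZPeriodic {N : ℕ} {α : Type*} (f : Euc N → α) : Prop :=
  ∀ (x : Euc N) (k : Fin N → ℤ), f (x + intVec k) = f x

/-- `b` is a coupling matrix: off-diagonal entries are nonpositive and
row sums are nonnegative. -/
def IsCouplingMat {m : ℕ} (b : Fin m → Fin m → ℝ) : Prop :=
  (∀ i j, j ≠ i → b i j ≤ 0) ∧ (∀ i, 0 ≤ ∑ j, b i j)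

/-- `b` is degenerate: all row sums vanish. -/
def IsDegenerateMat {m : ℕ} (b : Fin m → Fin m → ℝ) : Prop :=
  ∀ i, ∑ j, b i j = 0

/-- `b` is irreducible: for every nonempty proper subset `I` of the indices
there are `i ∈ I` and `j ∉ I` with `b i j ≠ 0`. -/
def IsIrreducibleMat {m : ℕ} (b : Fin m → Fin m → ℝ) : Prop :=
  ∀ I : Finset (Fin m), I.Nonempty → I ≠ Finset.univ → ∃ i ∈ I, ∃ j, j ∉ I ∧ b i j ≠ 0

/-- `H` is a convex Hamiltonian on the torus: continuous, convex in the momentum,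
`ℤ^N`-periodic in the space variable, and coercive (uniformly in `x`). -/
def IsConvexHamiltonian {N : ℕ} (H : Euc N → Euc N → ℝ) : Prop :=
  Continuous (fun q : Euc N × Euc N => H q.1 q.2) ∧
  (∀ x : Euc N, ConvexOn ℝ Set.univ (H x)) ∧
  (∀ (x : Euc N) (k : Fin N → ℤ) (p : Euc N), H (x + intVec k) p = H x p) ∧
  (∃ α β : ℝ → ℝ, Tendsto α atTop atTop ∧ Tendsto β atTop atTop ∧
    ∀ x p, α ‖p‖ ≤ H x p ∧ H x p ≤ β ‖p‖)

/-- `B` is a continuous field of irreducible degenerate coupling matrices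
on the torus. -/
def IsCouplingField {N m : ℕ} (B : Euc N → Fin m → Fin m → ℝ) : Prop :=
  (∀ i j, Continuous fun x => B x i j) ∧
  (∀ i j, ZPeriodic fun x => B x i j) ∧
  (∀ x, IsCouplingMat (B x) ∧ IsDegenerateMat (B x) ∧ IsIrreducibleMat (B x))

/-- `u` is a viscosity subsolution of the weakly coupled system
`H_i(x,Du_i) + (B(x)u(x))_i = a_i` on the torus. -/
def IsSubSol {N m : ℕ} (H : Fin m → Euc N → Euc N → ℝ) (B : Euc N → Fin m → Fin m → ℝ)
    (a : Fin m → ℝ) (u : Fin m → Euc N → ℝ) : Prop :=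
  ∀ (i : Fin m) (x : Euc N) (φ : Euc N → ℝ), ContDiff ℝ 1 φ →
    IsLocalMax (fun y => u i y - φ y) x →
    H i x (gradient φ x) + ∑ j, B x i j * u j x ≤ a i

/-- `u` is a viscosity supersolution of the weakly coupled system
`H_i(x,Du_i) + (B(x)u(x))_i = a_i` on the torus. -/
def IsSuperSol {N m : ℕ} (H : Fin m → Euc N → Euc N → ℝ) (B : Euc N → Fin m → Fin m → ℝ)
    (a : Fin m → ℝ) (u : Fin m → Euc N → ℝ) : Prop :=
  ∀ (i : Fin m) (x : Euc N) (φ : Euc N → ℝ), ContDiff ℝ 1 φ →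
    IsLocalMin (fun y => u i y - φ y) x →
    a i ≤ H i x (gradient φ x) + ∑ j, B x i j * u j x

/-- The `i`-th equation subsolution property, restricted to a subset `U` of `ℝ^N`. -/
def SubSolIdxOn {N m : ℕ} (H : Fin m → Euc N → Euc N → ℝ) (B : Euc N → Fin m → Fin m → ℝ)
    (i : Fin m) (U : Set (Euc N)) (u : Fin m → Euc N → ℝ) : Prop :=
  ∀ x ∈ U, ∀ φ : Euc N → ℝ, ContDiff ℝ 1 φ →
    IsLocalMax (fun y => u i y - φ y) x →
    H i x (gradient φ x) + ∑ j, B x i j * u j x ≤ 0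

/-- The `i`-th equation supersolution property, restricted to a subset `U` of `ℝ^N`. -/
def SuperSolIdxOn {N m : ℕ} (H : Fin m → Euc N → Euc N → ℝ) (B : Euc N → Fin m → Fin m → ℝ)
    (i : Fin m) (U : Set (Euc N)) (u : Fin m → Euc N → ℝ) : Prop :=
  ∀ x ∈ U, ∀ φ : Euc N → ℝ, ContDiff ℝ 1 φ →
    IsLocalMin (fun y => u i y - φ y) x →
    0 ≤ H i x (gradient φ x) + ∑ j, B x i j * u j x

/-- A continuous `ℝ^m`-valued function on the torus (componentwise continuous
and `ℤ^N`-periodic). -/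
def IsTorusFun {N m : ℕ} (u : Fin m → Euc N → ℝ) : Prop :=
  (∀ i, Continuous (u i)) ∧ (∀ i, ZPeriodic (u i))

/-- The system with constant right-hand side `a` admits a continuous viscosity
subsolution. -/
def HasSubSol {N m : ℕ} (H : Fin m → Euc N → Euc N → ℝ) (B : Euc N → Fin m → Fin m → ℝ)
    (a : ℝ) : Prop :=
  ∃ u : Fin m → Euc N → ℝ, IsTorusFun u ∧ IsSubSol H B (fun _ => a) u

/-- The set `H(0)` of critical subsolutions (the critical value being
assumed to be `0`). -/
def Crit {N m : ℕ} (H : Fin m → Euc N → Euc N → ℝ) (B : Euc N → Fin m → Fin m → ℝ) :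
    Set (Fin m → Euc N → ℝ) :=
  {u | IsTorusFun u ∧ IsSubSol H B (fun _ => 0) u}

/-- The Mañé matrix `Φ_{i,j}(y,x) = sup_{v ∈ H(0)} (v_i(x) - v_j(y))`. -/
def Mane {N m : ℕ} (H : Fin m → Euc N → Euc N → ℝ) (B : Euc N → Fin m → Fin m → ℝ)
    (i j : Fin m) (y x : Euc N) : ℝ :=
  sSup ((fun v : Fin m → Euc N → ℝ => v i x - v j y) '' Crit H B)

/-- The Aubry set: the set of points `y` such that the Mañé vector
`Φ_{·,i₀}(y,·)` is a critical (viscosity) solution on the whole torus; this is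
independent of the index `i₀`. -/
def MAubry {N m : ℕ} (H : Fin m → Euc N → Euc N → ℝ) (B : Euc N → Fin m → Fin m → ℝ) :
    Set (Euc N) :=
  {y | ∀ i₀ : Fin m,
    IsSubSol H B (fun _ => 0) (fun l x => Mane H B l i₀ y x) ∧
    IsSuperSol H B (fun _ => 0) (fun l x => Mane H B l i₀ y x)}

/-- The `i`-th component of a critical subsolution `v` is strict at `y`:
on some open neighbourhood `V` of `y` one has
`H_i(x,Dv_i(x)) + (B(x)v(x))_i ≤ -δ` for a.e. `x ∈ V`. -/
def StrictAt {N m : ℕ} (H : Fin m → Euc N → Euc N → ℝ) (B : Euc N → Fin m → Fin m → ℝ)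
    (v : Fin m → Euc N → ℝ) (i : Fin m) (y : Euc N) : Prop :=
  ∃ V : Set (Euc N), IsOpen V ∧ y ∈ V ∧ ∃ δ : ℝ, 0 < δ ∧
    ∀ᵐ x ∂(volume : Measure (Euc N)), x ∈ V →
      DifferentiableAt ℝ (v i) x ∧
      H i x (gradient (v i) x) + ∑ j, B x i j * v j x ≤ -δ

/-- `p` is a reachable gradient of `w` at `y`: a limit of gradients of `w`
along a sequence of differentiability points converging to `y`. -/
def ReachableGrad {N : ℕ} (w : Euc N → ℝ) (y : Euc N) (p : Euc N) : Prop :=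
  ∃ z : ℕ → Euc N, (∀ n, DifferentiableAt ℝ w (z n)) ∧
    Tendsto z atTop (nhds y) ∧
    Tendsto (fun n => gradient w (z n)) atTop (nhds p)

/-!
Normalise a critical subsolution `v` so that `v_i(y) = 0`. Then `v ≤ u := Φ_{·,i}(y,·)`
componentwise, with equality in the `i`-th component at `y`, and `u` is a critical solution
because `y` lies in the Aubry set. If `u_l(y) = v_l(y)` and `B_{lj}(y) ≠ 0`, doubling the
variables between the subsolution `v` and the supersolution `u` near `y` and subtracting the two
viscosity inequalities leaves `0 ≤ ∑_k B_{lk}(u_k - v_k) + o(1)`, whose right-hand side is at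
most `B_{lj}(y)(u_j(y) - v_j(y))/4 + o(1)`; hence `u_j(y) = v_j(y)`. Irreducibility of `B(y)`
spreads the equality to every component.

The supremum defining `Φ` is finite because critical subsolutions are equi-Lipschitz:
irreducibility, uniform on the torus by compactness, bounds their oscillation `v_a - v_b`, hence
the coupling term, hence (by coercivity) the gradients of test functions touching them from
above; and a cone `L √(‖x - x₀‖² + ε²)` with `L` above that bound touches them only near its
vertex.
-/

open Metric Set Topology

section InnerProductSpace

variable {E : Type*} [NormedAddCommGroup E] [InnerProductSpace ℝ E]

theorem contDiff_sqrt_norm_sub_sq_add_sq (a : E) {ε : ℝ} (hε : 0 < ε) :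
    ContDiff ℝ 1 (fun t => √(‖t - a‖ ^ 2 + ε ^ 2)) := by
  refine ((contDiff_norm_sq ℝ).comp (contDiff_id.sub contDiff_const)).add contDiff_const |>.sqrt ?_
  intro t
  simp only [Function.comp_apply]
  positivity

section Gradient

variable [CompleteSpace E] {f g : E → ℝ} {f' g' x : E}

theorem HasGradientAt.add (hf : HasGradientAt f f' x) (hg : HasGradientAt g g' x) :
    HasGradientAt (fun t => f t + g t) (f' + g') x := by
  rw [hasGradientAt_iff_hasFDerivAt, map_add]
  exact hf.hasFDerivAt.add hg.hasFDerivAt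

theorem HasGradientAt.const_mul (c : ℝ) (hf : HasGradientAt f f' x) :
    HasGradientAt (fun t => c * f t) (c • f') x := by
  rw [hasGradientAt_iff_hasFDerivAt, map_smul]
  exact hf.hasFDerivAt.const_mul c

theorem hasGradientAt_norm_sub_sq (a x : E) :
    HasGradientAt (fun t => ‖t - a‖ ^ 2) ((2 : ℝ) • (x - a)) x := by
  rw [hasGradientAt_iff_hasFDerivAt]
  refine ((hasFDerivAt_id x).sub_const a).norm_sq.congr_fderiv ?_
  ext v
  simp

theorem HasGradientAt.neg (hf : HasGradientAt f f' x) :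
    HasGradientAt (fun t => -f t) (-f') x := by
  rw [hasGradientAt_iff_hasFDerivAt, map_neg]
  exact hf.hasFDerivAt.neg

theorem hasGradientAt_sqrt_norm_sub_sq_add_sq (a x : E) {ε : ℝ} (hε : 0 < ε) :
    HasGradientAt (fun t => √(‖t - a‖ ^ 2 + ε ^ 2)) ((√(‖x - a‖ ^ 2 + ε ^ 2))⁻¹ • (x - a)) x := by
  have hpos : ‖x - a‖ ^ 2 + ε ^ 2 ≠ 0 := by positivity
  rw [hasGradientAt_iff_hasFDerivAt]
  refine ((((hasGradientAt_norm_sub_sq a x).hasFDerivAt).add_const (ε ^ 2)).sqrt hpos).congr_fderiv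
    ?_
  ext v
  simp
  field_simp

end Gradient

end InnerProductSpace

theorem exists_forall_sub_le_sub {X : Type*} [TopologicalSpace X] [Nonempty X] {f φ : X → ℝ}
    (hf : Continuous f) (hbdd : BddAbove (range f)) (hφ : Continuous φ)
    (hφ_lim : Tendsto φ (cocompact X) atTop) :
    ∃ z, ∀ t, f t - φ t ≤ f z - φ z := by
  obtain ⟨M, hM⟩ := hbdd
  refine (hf.sub hφ).exists_forall_ge (tendsto_atBot_mono (fun t => ?_)
    (tendsto_atBot_add_const_left _ M (tendsto_neg_atTop_atBot.comp hφ_lim)))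
  simpa [sub_eq_add_neg] using hM (mem_range_self t)

section Proper

variable {E : Type*} [NormedAddCommGroup E] [ProperSpace E]

theorem tendsto_norm_sub_cocompact_atTop (x : E) :
    Tendsto (fun t => ‖t - x‖) (cocompact E) atTop := by
  simpa [dist_eq_norm] using tendsto_dist_right_cocompact_atTop x

theorem exists_penalized_max {f g : E → ℝ} (hf : Continuous f) (hg : LowerSemicontinuous g)
    (hfg : ∀ x, f x ≤ g x) {y : E} (hy : g y = f y) {L : ℝ} (hL : 0 ≤ L)
    (hlip : ∀ x z, f z - f x ≤ L * ‖z - x‖) {n : ℝ} (hn : 0 < n) :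
    ∃ x z, x ∈ closedBall y 1 ∧ z ∈ closedBall y 1 ∧
      IsMaxOn (fun t => f t - n / 2 * ‖t - x‖ ^ 2) (closedBall y 1) z ∧
      IsMinOn (fun t => g t + n / 2 * ‖t - z‖ ^ 2 + ‖t - y‖ ^ 2) (closedBall y 1) x ∧
      ‖z - x‖ ≤ 2 * L / n ∧ ‖x - y‖ ^ 2 ≤ 2 * L ^ 2 / n ∧ g x ≤ f z := by
  set Ψ : E × E → ℝ := fun p => f p.2 - n / 2 * ‖p.2 - p.1‖ ^ 2 - ‖p.1 - y‖ ^ 2 + -g p.1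
  have hΨ : UpperSemicontinuous Ψ := by
    refine (Continuous.upperSemicontinuous (by fun_prop)).add
      (continuous_neg.comp_lowerSemicontinuous_antitone (hg.comp continuous_fst)
        fun _ _ h => neg_le_neg h)
  have hyy : (y, y) ∈ closedBall y 1 ×ˢ closedBall y 1 :=
    ⟨mem_closedBall_self zero_le_one, mem_closedBall_self zero_le_one⟩
  obtain ⟨⟨x, z⟩, ⟨hx, hz⟩, hmax⟩ := (hΨ.upperSemicontinuousOn _).exists_isMaxOn ⟨_, hyy⟩
    ((isCompact_closedBall y 1).prod (isCompact_closedBall y 1))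
  have h0 : 0 ≤ f z - g x - n / 2 * ‖z - x‖ ^ 2 - ‖x - y‖ ^ 2 := by
    have : Ψ (y, y) ≤ Ψ (x, z) := hmax hyy
    simp only [Ψ, sub_self, norm_zero, hy] at this
    linarith
  have hd := norm_nonneg (z - x)
  have hpen : n / 2 * ‖z - x‖ ^ 2 + ‖x - y‖ ^ 2 ≤ L * ‖z - x‖ := by
    linarith [hfg x, hlip x z]
  have hzx : ‖z - x‖ ≤ 2 * L / n := by
    rw [le_div_iff₀ hn]
    nlinarith [sq_nonneg ‖x - y‖]
  refine ⟨x, z, hx, hz, fun t ht => ?_, fun t ht => ?_, hzx, ?_, ?_⟩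
  · have : Ψ (x, t) ≤ Ψ (x, z) := hmax (show (x, t) ∈ _ ×ˢ _ from ⟨hx, ht⟩)
    exact (by simp only [Ψ] at this; linarith :
      f t - n / 2 * ‖t - x‖ ^ 2 ≤ f z - n / 2 * ‖z - x‖ ^ 2)
  · have : Ψ (t, z) ≤ Ψ (x, z) := hmax (show (t, z) ∈ _ ×ˢ _ from ⟨ht, hz⟩)
    exact (by simp only [Ψ, norm_sub_rev z] at this; linarith :
      g x + n / 2 * ‖x - z‖ ^ 2 + ‖x - y‖ ^ 2 ≤ g t + n / 2 * ‖t - z‖ ^ 2 + ‖t - y‖ ^ 2)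
  · calc ‖x - y‖ ^ 2 ≤ L * (2 * L / n) := by nlinarith
      _ = 2 * L ^ 2 / n := by ring
  · nlinarith [sq_nonneg ‖x - y‖]

variable [InnerProductSpace ℝ E]

theorem exists_dist_lt_isLocalMax_sub {f : E → ℝ} (hf : Continuous f) (hbdd : BddAbove (range f))
    (x : E) {ε : ℝ} (hε : 0 < ε) :
    ∃ z φ, dist z x < ε ∧ ContDiff ℝ 1 φ ∧ IsLocalMax (fun t => f t - φ t) z := by
  obtain ⟨M, hM⟩ := hbdd
  have hMx : f x ≤ M := hM (mem_range_self x)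
  set c := (M - f x + 1) / ε ^ 2
  have hc : 0 < c := by positivity
  have hφ : ContDiff ℝ 1 (fun t => c * ‖t - x‖ ^ 2) :=
    contDiff_const.mul ((contDiff_norm_sq ℝ).comp (contDiff_id.sub contDiff_const))
  obtain ⟨z, hz⟩ := exists_forall_sub_le_sub hf ⟨M, hM⟩ hφ.continuous
    (tendsto_id.const_mul_atTop hc |>.comp
      ((tendsto_pow_atTop two_ne_zero).comp (tendsto_norm_sub_cocompact_atTop x)))
  refine ⟨z, _, ?_, hφ, Eventually.of_forall hz⟩
  by_contra! hzx
  have hcz : M - f x + 1 ≤ c * ‖z - x‖ ^ 2 := by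
    rw [← dist_eq_norm]
    calc M - f x + 1 = c * ε ^ 2 := by simp only [c]; field_simp
      _ ≤ c * dist z x ^ 2 := by gcongr
  have hxz : f x ≤ f z - c * ‖z - x‖ ^ 2 := by simpa using hz x
  linarith [hM (mem_range_self z)]

theorem sub_le_mul_norm_of_isLocalMax_sub {f : E → ℝ} (hf : Continuous f)
    (hbdd : BddAbove (range f)) {R L : ℝ} (hR : 0 ≤ R) (hRL : R < L)
    (htouch : ∀ z φ, ContDiff ℝ 1 φ → IsLocalMax (fun t => f t - φ t) z → ‖gradient φ z‖ ≤ R)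
    (x x' : E) : f x' - f x ≤ L * ‖x' - x‖ := by
  refine le_of_forall_pos_lt_add fun η hη => ?_
  obtain ⟨δ, hδ, hfδ⟩ := Metric.continuous_iff.1 hf x η hη
  set ε := (L - R) * δ / (R + 1)
  have hε : 0 < ε := by have := sub_pos.2 hRL; positivity
  have hL : 0 < L := hR.trans_lt hRL
  set s : E → ℝ := fun t => √(‖t - x‖ ^ 2 + ε ^ 2)
  have hs_le : ∀ t, s t ≤ ‖t - x‖ + ε := fun t =>
    Real.sqrt_le_iff.2 ⟨by positivity, by nlinarith [norm_nonneg (t - x)]⟩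
  have hs_ge : ∀ t, ‖t - x‖ ≤ s t ∧ ε ≤ s t := fun t =>
    ⟨Real.le_sqrt_of_sq_le (by nlinarith),
      Real.le_sqrt_of_sq_le (by nlinarith [norm_nonneg (t - x)])⟩
  have hφ : ContDiff ℝ 1 (fun t => L * s t) :=
    contDiff_const.mul (contDiff_sqrt_norm_sub_sq_add_sq x hε)
  obtain ⟨z, hz⟩ := exists_forall_sub_le_sub hf hbdd hφ.continuous
    (tendsto_id.const_mul_atTop hL |>.comp <|
      tendsto_atTop_mono (fun t => (hs_ge t).1) (tendsto_norm_sub_cocompact_atTop x))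
  have hgrad : ‖gradient (fun t => L * s t) z‖ = L * ‖z - x‖ / s z := by
    rw [((hasGradientAt_sqrt_norm_sub_sq_add_sq x z hε).const_mul L).gradient, norm_smul,
      norm_smul, norm_inv, Real.norm_of_nonneg hL.le, Real.norm_of_nonneg (Real.sqrt_nonneg _)]
    ring
  have hzx : (L - R) * ‖z - x‖ ≤ R * ε := by
    have := htouch z _ hφ (Eventually.of_forall hz)
    rw [hgrad, div_le_iff₀ (hε.trans_le (hs_ge z).2)] at this
    nlinarith [hs_le z]
  have hzδ : dist z x < δ := by
    rw [dist_eq_norm]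
    have : R * ε < (L - R) * δ := by
      simp only [ε]
      rw [mul_div_assoc', div_lt_iff₀ (by linarith)]
      nlinarith [sub_pos.2 hRL]
    nlinarith [sub_pos.2 hRL]
  have hfz := hfδ z hzδ
  rw [Real.dist_eq, abs_lt] at hfz
  calc f x' - f x ≤ f z - f x + L * (s x' - s z) := by linarith [hz x']
    _ ≤ f z - f x + L * ‖x' - x‖ := by nlinarith [hs_le x', (hs_ge z).2]
    _ < L * ‖x' - x‖ + η := by linarith

end Proper

theorem eventually_mul_le_of_neg {X : Type*} [TopologicalSpace X] {a d : X → ℝ} {y : X}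
    (ha : ContinuousAt a y) (hay : a y < 0) (hd : LowerSemicontinuousAt d y) (hdy : 0 < d y) :
    ∀ᶠ x in 𝓝 y, a x * d x ≤ a y * d y / 4 := by
  filter_upwards [ha.eventually_lt_const (show a y < a y / 2 by linarith),
    hd (d y / 2) (by linarith)] with x hax hdx
  nlinarith

theorem exists_norm_sub_intVec_le_sqrt {N : ℕ} (x : Euc N) :
    ∃ k : Fin N → ℤ, ‖x - intVec k‖ ≤ √N := by
  refine ⟨fun i => ⌊x i⌋, ?_⟩
  rw [EuclideanSpace.norm_eq]
  refine Real.sqrt_le_sqrt ?_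
  calc ∑ i, ‖(x - intVec fun i => ⌊x i⌋) i‖ ^ 2 ≤ ∑ _i : Fin N, (1 : ℝ) := by
        gcongr with i
        have : (x - intVec fun i => ⌊x i⌋) i = Int.fract (x i) := by
          simp [intVec, ← Int.self_sub_floor]
        rw [this, Real.norm_of_nonneg (Int.fract_nonneg _)]
        nlinarith [Int.fract_nonneg (x i), Int.fract_lt_one (x i)]
    _ = N := by simp

theorem ZPeriodic.exists_mem_closedBall_eq {N : ℕ} {α : Type*} {f : Euc N → α}
    (hf : ZPeriodic f) (x : Euc N) : ∃ x' ∈ closedBall (0 : Euc N) √N, f x' = f x := by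
  obtain ⟨k, hk⟩ := exists_norm_sub_intVec_le_sqrt x
  exact ⟨x - intVec k, by simpa using hk, by simpa using (hf (x - intVec k) k).symm⟩

theorem ZPeriodic.isCompact_range {N : ℕ} {α : Type*} [TopologicalSpace α] {f : Euc N → α}
    (hf : ZPeriodic f) (hc : Continuous f) : IsCompact (range f) := by
  have : range f = f '' closedBall 0 √N :=
    (image_subset_range _ _).antisymm' (by rintro _ ⟨x, rfl⟩; exact hf.exists_mem_closedBall_eq x)
  exact this ▸ (isCompact_closedBall _ _).image hc

section CouplingMatrix

variable {m : ℕ} {b : Fin m → Fin m → ℝ}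

theorem IsDegenerateMat.sum_mul_sub (hb : IsDegenerateMat b) (l : Fin m) (w : Fin m → ℝ)
    (t : ℝ) : ∑ k, b l k * (w k - t) = ∑ k, b l k * w k := by
  simp [mul_sub, Finset.sum_sub_distrib, ← Finset.sum_mul, hb l]

theorem IsDegenerateMat.neg_sum_mul_le (hb : IsDegenerateMat b)
    {l : Fin m} {w : Fin m → ℝ} {C K : ℝ} (hC : ∀ k, |b l k| ≤ C) (hK : ∀ k, |w k - w l| ≤ K) :
    -∑ k, b l k * w k ≤ m * (C * K) := by
  rw [← hb.sum_mul_sub l w (w l), ← Finset.sum_neg_distrib]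
  calc ∑ k, -(b l k * (w k - w l)) ≤ ∑ _k : Fin m, C * K := by
        refine Finset.sum_le_sum fun k _ => (neg_le_abs _).trans ?_
        rw [abs_mul]
        exact mul_le_mul (hC k) (hK k) (abs_nonneg _) ((abs_nonneg _).trans (hC k))
    _ = m * (C * K) := by simp

namespace IsCouplingMat

theorem diag_nonneg (hb : IsCouplingMat b) (l : Fin m) : 0 ≤ b l l := by
  have hoff : ∑ k ∈ Finset.univ.erase l, b l k ≤ 0 :=
    Finset.sum_nonpos fun k hk => hb.1 l k (Finset.ne_of_mem_erase hk)
  linarith [hb.2 l, Finset.add_sum_erase Finset.univ (b l) (Finset.mem_univ l)]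

theorem mul_sub_nonneg (hb : IsCouplingMat b) {l : Fin m} {w : Fin m → ℝ}
    (hw : ∀ k, w k ≤ w l) (k : Fin m) : 0 ≤ b l k * (w k - w l) := by
  rcases eq_or_ne k l with rfl | hkl
  · simp
  · exact mul_nonneg_of_nonpos_of_nonpos (hb.1 l k hkl) (by linarith [hw k])

theorem sum_mul_le_of_nonneg (hb : IsCouplingMat b) {d : Fin m → ℝ} (hd : ∀ k, 0 ≤ d k)
    {l j : Fin m} (hjl : j ≠ l) : ∑ k, b l k * d k ≤ b l l * d l + b l j * d j := by
  calc ∑ k, b l k * d k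
      ≤ ∑ k, ((if k = l then b l l * d l else 0) + (if k = j then b l j * d j else 0)) := by
        refine Finset.sum_le_sum fun k _ => ?_
        by_cases hk : k = l
        · subst hk; simp [hjl.symm]
        by_cases hk' : k = j
        · subst hk'; simp [hk]
        · simpa [hk, hk'] using mul_nonpos_of_nonpos_of_nonneg (hb.1 l k hk) (hd k)
    _ = b l l * d l + b l j * d j := by simp [Finset.sum_add_distrib]

theorem exists_sum_mul_pos (hb : IsCouplingMat b) (hd : IsDegenerateMat b)
    (hi : IsIrreducibleMat b) {w : Fin m → ℝ} {a c : Fin m} (hac : w c < w a) :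
    ∃ l, 0 < ∑ k, b l k * w k := by
  set I := Finset.univ.filter fun k => ∀ k', w k' ≤ w k
  obtain ⟨l₀, -, hl₀⟩ := Finset.exists_max_image Finset.univ w ⟨a, Finset.mem_univ a⟩
  have hcI : c ∉ I := by simpa [I] using ⟨a, hac⟩
  obtain ⟨l, hlI, j, hjI, hlj⟩ := hi I ⟨l₀, by simpa [I] using hl₀⟩
    (ne_of_mem_of_not_mem' (Finset.mem_univ c) hcI).symm
  have hlmax : ∀ k, w k ≤ w l := by simpa [I] using hlI
  have hjl : w j < w l := by
    obtain ⟨k, hk⟩ : ∃ k, w j < w k := by simpa [I] using hjI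
    exact hk.trans_le (hlmax k)
  have hj : b l j < 0 := (hb.1 l j (fun h => hjl.ne (by rw [h]))).lt_of_ne hlj
  refine ⟨l, ?_⟩
  rw [← hd.sum_mul_sub l w (w l)]
  calc 0 < b l j * (w j - w l) := mul_pos_of_neg_of_neg hj (by linarith)
    _ ≤ _ := Finset.single_le_sum (f := fun k => b l k * (w k - w l))
        (fun k _ => hb.mul_sub_nonneg hlmax k) (Finset.mem_univ j)

end IsCouplingMat

theorem IsIrreducibleMat.forall_of_closed (hb : IsIrreducibleMat b) {P : Fin m → Prop} {i : Fin m}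
    (hi : P i) (hP : ∀ l j, P l → b l j ≠ 0 → P j) (k : Fin m) : P k := by
  classical
  by_contra hk
  obtain ⟨l, hl, j, hj, hlj⟩ := hb (Finset.univ.filter P) ⟨i, by simpa using hi⟩
    (fun h => hk (Finset.mem_filter.1 (by rw [h]; exact Finset.mem_univ k)).2)
  simp only [Finset.mem_filter, Finset.mem_univ, true_and] at hl hj
  exact hj (hP l j hl hlj)

end CouplingMatrix

section CouplingField

variable {N m : ℕ} {B : Euc N → Fin m → Fin m → ℝ}

namespace IsCouplingField

theorem zPeriodic (hB : IsCouplingField B) : ZPeriodic B :=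
  fun x k => funext fun i => funext fun j => hB.2.1 i j x k

theorem continuous (hB : IsCouplingField B) : Continuous B :=
  continuous_pi fun i => continuous_pi fun j => hB.1 i j

theorem exists_abs_le (hB : IsCouplingField B) : ∃ C, ∀ x l j, |B x l j| ≤ C := by
  obtain ⟨C, hC⟩ := (hB.zPeriodic.isCompact_range hB.continuous).isBounded.exists_norm_le
  exact ⟨C, fun x l j => (norm_le_pi_norm (B x l) j).trans
    ((norm_le_pi_norm (B x) l).trans (hC _ (mem_range_self x)))⟩

theorem continuous_row (hB : IsCouplingField B) {w : Fin m → Euc N → ℝ}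
    (hw : ∀ k, Continuous (w k)) (l : Fin m) : Continuous fun x => ∑ k, B x l k * w k x :=
  continuous_finsetSum _ fun k _ => (hB.1 l k).mul (hw k)

theorem exists_pos_le_row [Nonempty (Fin m)] (hB : IsCouplingField B) :
    ∃ c > 0, ∀ x (w : Fin m → ℝ), w ∈ Icc 0 1 → (∃ a b, w a - w b = 1) →
      ∃ l, c ≤ ∑ k, B x l k * w k := by
  set S := Icc (0 : Fin m → ℝ) 1 ∩ ⋃ a, ⋃ b, {w | w a - w b = 1}
  have hS : IsCompact S := isCompact_Icc.inter_right <| isClosed_iUnion_of_finite fun a =>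
    isClosed_iUnion_of_finite fun b => isClosed_eq (by fun_prop) continuous_const
  set g : Euc N × (Fin m → ℝ) → ℝ :=
    fun q => Finset.univ.sup' Finset.univ_nonempty fun l => ∑ k, B q.1 l k * q.2 k
  have hg : Continuous g := Continuous.finset_sup'_apply _ fun l _ =>
    continuous_finsetSum _ fun k _ => ((hB.1 l k).comp continuous_fst).mul
      ((continuous_apply k).comp continuous_snd)
  have hpos : ∀ q ∈ closedBall (0 : Euc N) √N ×ˢ S, 0 < g q := by
    rintro ⟨x, w⟩ ⟨-, -, hw⟩
    obtain ⟨a, b, hab⟩ : ∃ a b, w a - w b = 1 := by simpa using hw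
    obtain ⟨l, hl⟩ := (hB.2.2 x).1.exists_sum_mul_pos (hB.2.2 x).2.1 (hB.2.2 x).2.2
      (show w b < w a by linarith)
    exact hl.trans_le (Finset.le_sup' (fun l => ∑ k, B x l k * w k) (Finset.mem_univ l))
  obtain ⟨c, hc, hcg⟩ := ((isCompact_closedBall _ _).prod hS).exists_forall_le' hg.continuousOn hpos
  refine ⟨c, hc, fun x w hw hab => ?_⟩
  obtain ⟨x', hx', hBx⟩ := hB.zPeriodic.exists_mem_closedBall_eq x
  obtain ⟨l, -, hl⟩ := Finset.exists_mem_eq_sup' Finset.univ_nonempty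
    fun l => ∑ k, B x' l k * w k
  refine ⟨l, ?_⟩
  have := hcg (x', w) ⟨hx', hw, by simpa using hab⟩
  rw [← hBx]
  exact this.trans_eq hl

theorem exists_pos_mul_sub_le_row [Nonempty (Fin m)] (hB : IsCouplingField B) :
    ∃ c > 0, ∀ x (w : Fin m → ℝ) a b, ∃ l, c * (w a - w b) ≤ ∑ k, B x l k * w k := by
  obtain ⟨c, hc, hcB⟩ := hB.exists_pos_le_row
  refine ⟨c, hc, fun x w a b => ?_⟩
  obtain ⟨kM, -, hkM⟩ := Finset.exists_max_image Finset.univ w Finset.univ_nonempty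
  obtain ⟨km, -, hkm⟩ := Finset.exists_min_image Finset.univ w Finset.univ_nonempty
  replace hkM := fun k => hkM k (Finset.mem_univ k)
  replace hkm := fun k => hkm k (Finset.mem_univ k)
  rcases le_or_gt (w a - w b) 0 with hab | hab
  · refine ⟨kM, (mul_nonpos_of_nonneg_of_nonpos hc.le hab).trans ?_⟩
    rw [← (hB.2.2 x).2.1.sum_mul_sub kM w (w kM)]
    exact Finset.sum_nonneg fun k _ => (hB.2.2 x).1.mul_sub_nonneg hkM k
  set osc := w kM - w km
  have hosc : 0 < osc := by linarith [hkM a, hkm b]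
  set w' : Fin m → ℝ := fun k => (w k - w km) / osc
  have hw' : w' ∈ Icc 0 1 := ⟨fun k => div_nonneg (by linarith [hkm k]) hosc.le,
    fun k => (div_le_one hosc).2 (by linarith [hkM k])⟩
  obtain ⟨l, hl⟩ := hcB x w' hw'
    ⟨kM, km, by simp only [w', sub_self, zero_div, sub_zero]; exact div_self hosc.ne'⟩
  have hrow : ∑ k, B x l k * w' k = (∑ k, B x l k * w k) / osc := by
    simp only [w', mul_div_assoc', ← Finset.sum_div, (hB.2.2 x).2.1.sum_mul_sub]
  refine ⟨l, ?_⟩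
  rw [hrow, le_div_iff₀ hosc] at hl
  nlinarith [hkM a, hkm b]

end IsCouplingField

end CouplingField

section Hamiltonian

variable {N : ℕ} {H : Euc N → Euc N → ℝ}

namespace IsConvexHamiltonian

theorem zPeriodic (hH : IsConvexHamiltonian H) : ZPeriodic H :=
  fun x k => funext (hH.2.2.1 x k)

theorem exists_le (hH : IsConvexHamiltonian H) : ∃ a, ∀ x p, a ≤ H x p := by
  obtain ⟨α, _, hα, -, hαH⟩ := hH.2.2.2
  obtain ⟨R, hR⟩ := eventually_atTop.1 (hα.eventually_ge_atTop 0)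
  obtain ⟨a, ha⟩ := ((isCompact_closedBall (0 : Euc N) √N).prod
    (isCompact_closedBall (0 : Euc N) R)).bddBelow_image hH.1.continuousOn
  refine ⟨min a 0, fun x p => ?_⟩
  rcases le_or_gt ‖p‖ R with hp | hp
  · obtain ⟨x', hx', hHx⟩ := hH.zPeriodic.exists_mem_closedBall_eq x
    rw [← hHx]
    exact (min_le_left _ _).trans (ha ⟨(x', p), ⟨hx', by simpa using hp⟩, rfl⟩)
  · exact (min_le_right _ _).trans ((hR _ hp.le).trans (hαH x p).1)

theorem exists_norm_le_of_le (hH : IsConvexHamiltonian H) (C : ℝ) :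
    ∃ R, ∀ x p, H x p ≤ C → ‖p‖ ≤ R := by
  obtain ⟨α, _, hα, -, hαH⟩ := hH.2.2.2
  obtain ⟨R, hR⟩ := eventually_atTop.1 (hα.eventually_gt_atTop C)
  exact ⟨R, fun x p hp => not_lt.1 fun hRp => ((hR _ hRp.le).trans_le (hαH x p).1).not_ge hp⟩

end IsConvexHamiltonian

end Hamiltonian

section Viscosity

variable {N m : ℕ} {H : Fin m → Euc N → Euc N → ℝ} {B : Euc N → Fin m → Fin m → ℝ}

theorem IsSubSol.add_const (hB : IsCouplingField B) {a : Fin m → ℝ} {u : Fin m → Euc N → ℝ}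
    (hu : IsSubSol H B a u) (c : ℝ) : IsSubSol H B a (fun j x => u j x + c) := by
  intro l x φ hφ hmax
  have hgrad : gradient (fun t => φ t - c) x = gradient φ x := by
    simp only [gradient, fderiv_sub_const]
  have hrow : ∑ j, B x l j * (u j x + c) = ∑ j, B x l j * u j x := by
    simpa using (hB.2.2 x).2.1.sum_mul_sub l (u · x) (-c)
  rw [hrow, ← hgrad]
  exact hu l x _ (hφ.sub contDiff_const) (by simpa only [sub_sub_eq_add_sub, add_sub_assoc,
    add_sub_cancel_right] using hmax)

theorem add_const_mem_crit (hB : IsCouplingField B) {v : Fin m → Euc N → ℝ}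
    (hv : v ∈ Crit H B) (c : ℝ) : (fun j x => v j x + c) ∈ Crit H B :=
  ⟨⟨fun l => (hv.1.1 l).add continuous_const, fun l x k => by simp only [hv.1.2 l x k]⟩,
    hv.2.add_const hB c⟩

theorem IsSubSol.sum_mul_le (hB : IsCouplingField B) {v : Fin m → Euc N → ℝ}
    (hv : IsSubSol H B (fun _ => 0) v) (hvc : ∀ k, Continuous (v k)) {l : Fin m}
    (hvl : BddAbove (range (v l))) {a : ℝ} (ha : ∀ x p, a ≤ H l x p) (x : Euc N) :
    ∑ k, B x l k * v k x ≤ -a := by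
  refine (isClosed_le (hB.continuous_row hvc l) continuous_const).closure_subset
    (Metric.mem_closure_iff.2 fun ε hε => ?_)
  obtain ⟨z, φ, hz, hφ, hmax⟩ := exists_dist_lt_isLocalMax_sub (hvc l) hvl x hε
  have hsub : H l z (gradient φ z) + ∑ k, B z l k * v k z ≤ 0 := hv l z φ hφ hmax
  exact ⟨z, show _ ≤ -a by linarith [ha z (gradient φ z)], by rwa [dist_comm]⟩

theorem exists_le_hamiltonian (hH : ∀ i, IsConvexHamiltonian (H i)) :
    ∃ a, ∀ l x p, a ≤ H l x p := by
  choose a ha using fun l => (hH l).exists_le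
  obtain ⟨a₀, ha₀⟩ := (Set.finite_range a).bddBelow
  exact ⟨a₀, fun l x p => (ha₀ (mem_range_self l)).trans (ha l x p)⟩

theorem exists_norm_le_of_hamiltonian_le (hH : ∀ i, IsConvexHamiltonian (H i)) (C : ℝ) :
    ∃ R, ∀ l x p, H l x p ≤ C → ‖p‖ ≤ R := by
  choose R hR using fun l => (hH l).exists_norm_le_of_le C
  obtain ⟨R₀, hR₀⟩ := (Set.finite_range R).bddAbove
  exact ⟨R₀, fun l x p hp => (hR l x p hp).trans (hR₀ (mem_range_self l))⟩

theorem bddAbove_range_of_mem_crit {v : Fin m → Euc N → ℝ} (hv : v ∈ Crit H B) (l : Fin m) :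
    BddAbove (range (v l)) :=
  ((hv.1.2 l).isCompact_range (hv.1.1 l)).bddAbove

theorem exists_sub_le_of_mem_crit [Nonempty (Fin m)] (hH : ∀ i, IsConvexHamiltonian (H i))
    (hB : IsCouplingField B) : ∃ K, ∀ v ∈ Crit H B, ∀ x a b, v a x - v b x ≤ K := by
  obtain ⟨a, ha⟩ := exists_le_hamiltonian hH
  obtain ⟨c, hc, hcB⟩ := hB.exists_pos_mul_sub_le_row
  refine ⟨-a / c, fun v hv x i j => ?_⟩
  obtain ⟨l, hl⟩ := hcB x (v · x) i j
  rw [le_div_iff₀ hc, mul_comm]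
  exact hl.trans (hv.2.sum_mul_le hB hv.1.1 (bddAbove_range_of_mem_crit hv l) (ha l) x)

theorem exists_norm_gradient_le_of_mem_crit [Nonempty (Fin m)]
    (hH : ∀ i, IsConvexHamiltonian (H i)) (hB : IsCouplingField B) :
    ∃ R, ∀ v ∈ Crit H B, ∀ l z φ, ContDiff ℝ 1 φ → IsLocalMax (fun t => v l t - φ t) z →
      ‖gradient φ z‖ ≤ R := by
  obtain ⟨K, hK⟩ := exists_sub_le_of_mem_crit hH hB
  obtain ⟨C, hC⟩ := hB.exists_abs_le
  obtain ⟨R, hR⟩ := exists_norm_le_of_hamiltonian_le hH (m * (C * K))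
  refine ⟨R, fun v hv l z φ hφ hmax => hR l z _ ?_⟩
  have hrow := (hB.2.2 z).2.1.neg_sum_mul_le (hC z l) (w := (v · z))
    fun k => abs_sub_le_iff.2 ⟨hK v hv z k l, hK v hv z l k⟩
  linarith [hv.2 l z φ hφ hmax]

theorem exists_lipschitz_of_mem_crit [Nonempty (Fin m)] (hH : ∀ i, IsConvexHamiltonian (H i))
    (hB : IsCouplingField B) :
    ∃ L, 0 ≤ L ∧ ∀ v ∈ Crit H B, ∀ l x x', v l x' - v l x ≤ L * ‖x' - x‖ := by
  obtain ⟨R, hR⟩ := exists_norm_gradient_le_of_mem_crit hH hB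
  refine ⟨max R 0 + 1, by positivity, fun v hv l =>
    sub_le_mul_norm_of_isLocalMax_sub (hv.1.1 l) (bddAbove_range_of_mem_crit hv l)
      (le_max_right R 0) (lt_add_one _) fun z φ hφ hmax => ?_⟩
  exact (hR v hv l z φ hφ hmax).trans (le_max_left R 0)

theorem bddAbove_mane_image [Nonempty (Fin m)] (hH : ∀ i, IsConvexHamiltonian (H i))
    (hB : IsCouplingField B) (l i : Fin m) (y x : Euc N) :
    BddAbove ((fun v : Fin m → Euc N → ℝ => v l x - v i y) '' Crit H B) := by
  obtain ⟨K, hK⟩ := exists_sub_le_of_mem_crit hH hB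
  obtain ⟨L, -, hL⟩ := exists_lipschitz_of_mem_crit hH hB
  refine ⟨K + L * ‖x - y‖, ?_⟩
  rintro _ ⟨v, hv, rfl⟩
  linarith [hK v hv x l i, hL v hv i y x]

theorem mane_self (i : Fin m) (y : Euc N) : Mane H B i i y y = 0 := by
  rcases (Crit H B).eq_empty_or_nonempty with h | h
  · simp [Mane, h]
  · simp [Mane, h.image_const]

theorem lowerSemicontinuous_mane {l i : Fin m} {y : Euc N}
    (hbdd : ∀ x, BddAbove ((fun v : Fin m → Euc N → ℝ => v l x - v i y) '' Crit H B)) :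
    LowerSemicontinuous (Mane H B l i y) := by
  have hsup : Mane H B l i y = fun x => ⨆ v : Crit H B, (v.1 l x - v.1 i y) := by
    funext x
    simp only [Mane, image_eq_range]
    rfl
  rw [hsup]
  refine lowerSemicontinuous_ciSup (fun x => ?_)
    fun v => ((v.2.1.1 l).sub continuous_const).lowerSemicontinuous
  simpa only [image_eq_range] using hbdd x

theorem IsSubSol.le_of_isMaxOn_sub_sq {w : Fin m → Euc N → ℝ}
    (hsub : IsSubSol H B (fun _ => 0) w) {l : Fin m} {s : Set (Euc N)} {x z : Euc N} {n : ℝ}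
    (hmax : IsMaxOn (fun t => w l t - n / 2 * ‖t - x‖ ^ 2) s z) (hs : s ∈ 𝓝 z) :
    H l z (n • (z - x)) + ∑ k, B z l k * w k z ≤ 0 := by
  have hφ : ContDiff ℝ 1 fun t : Euc N => n / 2 * ‖t - x‖ ^ 2 :=
    contDiff_const.mul ((contDiff_norm_sq ℝ).comp (contDiff_id.sub contDiff_const))
  have hgrad := (((hasGradientAt_norm_sub_sq x z).const_mul (n / 2))).gradient
  rw [smul_smul, div_mul_cancel₀ n two_ne_zero] at hgrad
  simpa only [hgrad] using hsub l z _ hφ (hmax.isLocalMax hs)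

theorem IsSuperSol.le_of_isMinOn_add_sq {u : Fin m → Euc N → ℝ}
    (hsuper : IsSuperSol H B (fun _ => 0) u) {l : Fin m} {s : Set (Euc N)} {x y z : Euc N}
    {n : ℝ} (hmin : IsMinOn (fun t => u l t + n / 2 * ‖t - z‖ ^ 2 + ‖t - y‖ ^ 2) s x)
    (hs : s ∈ 𝓝 x) :
    0 ≤ H l x (n • (z - x) - (2 : ℝ) • (x - y)) + ∑ k, B x l k * u k x := by
  have hφ : ContDiff ℝ 1 fun t : Euc N => -(n / 2 * ‖t - z‖ ^ 2 + ‖t - y‖ ^ 2) :=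
    (contDiff_const.mul ((contDiff_norm_sq ℝ).comp (contDiff_id.sub contDiff_const))).add
      ((contDiff_norm_sq ℝ).comp (contDiff_id.sub contDiff_const)) |>.neg
  have hgrad := ((((hasGradientAt_norm_sub_sq z x).const_mul (n / 2)).add
    (hasGradientAt_norm_sub_sq y x)).neg).gradient
  have hq : -((n / 2) • (2 : ℝ) • (x - z) + (2 : ℝ) • (x - y)) =
      n • (z - x) - (2 : ℝ) • (x - y) := by
    module
  rw [hq] at hgrad
  refine hgrad ▸ hsuper l x _ hφ ?_
  simpa only [sub_neg_eq_add, add_assoc] using hmin.isLocalMin hs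

theorem exists_seq_penalized {u w : Fin m → Euc N → ℝ} {l : Fin m}
    (hu : LowerSemicontinuous (u l)) (hsuper : IsSuperSol H B (fun _ => 0) u)
    (hwc : Continuous (w l)) (hsub : IsSubSol H B (fun _ => 0) w) {L : ℝ} (hL : 0 ≤ L)
    (hlip : ∀ x z, w l z - w l x ≤ L * ‖z - x‖) (hwu : ∀ x, w l x ≤ u l x) {y : Euc N}
    (hy : u l y = w l y) :
    ∃ (x z q : ℕ → Euc N) (q₀ : Euc N), Tendsto x atTop (𝓝 y) ∧ Tendsto z atTop (𝓝 y) ∧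
      Tendsto q atTop (𝓝 q₀) ∧ (∀ k, u l (x k) ≤ w l (z k)) ∧
      ∀ᶠ k in atTop, H l (z k) (q k) + ∑ i, B (z k) l i * w i (z k) ≤ 0 ∧
        0 ≤ H l (x k) (q k - (2 : ℝ) • (x k - y)) + ∑ i, B (x k) l i * u i (x k) := by
  choose x z hx hz hzmax hxmin hzx hxy hxz using fun k : ℕ =>
    exists_penalized_max hwc hu hwu hy hL hlip k.cast_add_one_pos
  have hρ := tendsto_one_div_add_atTop_nhds_zero_nat (𝕜 := ℝ)
  have hxlim : Tendsto x atTop (𝓝 y) := by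
    refine tendsto_iff_norm_sub_tendsto_zero.2 <| squeeze_zero (fun _ => norm_nonneg _)
      (fun k => Real.le_sqrt_of_sq_le ((hxy k).trans_eq (mul_one_div _ _).symm)) ?_
    simpa using ((hρ.const_mul (2 * L ^ 2)).sqrt)
  have hzx0 : Tendsto (fun k => z k - x k) atTop (𝓝 0) := by
    refine tendsto_zero_iff_norm_tendsto_zero.2 <| squeeze_zero (fun _ => norm_nonneg _)
      (fun k => (hzx k).trans_eq (mul_one_div _ _).symm) ?_
    simpa using hρ.const_mul (2 * L)
  have hzlim : Tendsto z atTop (𝓝 y) := by simpa using hzx0.add hxlim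
  set q : ℕ → Euc N := fun k => ((k : ℝ) + 1) • (z k - x k)
  have hq : ∀ k, q k ∈ closedBall 0 (2 * L) := fun k => by
    rw [mem_closedBall_zero_iff, norm_smul, Real.norm_of_nonneg k.cast_add_one_pos.le,
      ← le_div_iff₀' k.cast_add_one_pos]
    exact hzx k
  obtain ⟨q₀, -, σ, hσ, hqσ⟩ := (isCompact_closedBall _ _).tendsto_subseq hq
  have hvisc : ∀ᶠ k in atTop, H l (z k) (q k) + ∑ i, B (z k) l i * w i (z k) ≤ 0 ∧
      0 ≤ H l (x k) (q k - (2 : ℝ) • (x k - y)) + ∑ i, B (x k) l i * u i (x k) := by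
    filter_upwards [hxlim.eventually (ball_mem_nhds y one_pos),
      hzlim.eventually (ball_mem_nhds y one_pos)] with k hxk hzk
    exact ⟨hsub.le_of_isMaxOn_sub_sq (hzmax k) (closedBall_mem_nhds_of_mem hzk),
      hsuper.le_of_isMinOn_add_sq (hxmin k) (closedBall_mem_nhds_of_mem hxk)⟩
  exact ⟨x ∘ σ, z ∘ σ, q ∘ σ, q₀, hxlim.comp hσ.tendsto_atTop, hzlim.comp hσ.tendsto_atTop,
    hqσ, fun k => hxz (σ k), hσ.tendsto_atTop.eventually hvisc⟩

theorem eq_of_contact (hH : ∀ i, Continuous fun q : Euc N × Euc N => H i q.1 q.2)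
    (hB : IsCouplingField B) {u w : Fin m → Euc N → ℝ} (hu : ∀ k, LowerSemicontinuous (u k))
    (hsuper : IsSuperSol H B (fun _ => 0) u) (hwc : ∀ k, Continuous (w k))
    (hsub : IsSubSol H B (fun _ => 0) w) {L : ℝ} (hL : 0 ≤ L) {l : Fin m}
    (hlip : ∀ x z, w l z - w l x ≤ L * ‖z - x‖) (hwu : ∀ k x, w k x ≤ u k x) {y : Euc N}
    (hy : u l y = w l y) {j : Fin m} (hjl : j ≠ l) (hlj : B y l j ≠ 0) : u j y = w j y := by
  refine le_antisymm ?_ (hwu j y)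
  by_contra! hθ
  obtain ⟨x, z, q, q₀, hx, hz, hq, hxz, hvisc⟩ :=
    exists_seq_penalized (hu l) hsuper (hwc l) hsub hL hlip (hwu l) hy
  have hBlj : B y l j < 0 := ((hB.2.2 y).1.1 l j hjl).lt_of_ne hlj
  have hjump := hx.eventually <| eventually_mul_le_of_neg (hB.1 l j).continuousAt hBlj
    (((hu j).add (hwc j).neg.lowerSemicontinuous) y) (by linarith : 0 < u j y + -w j y)
  set err : ℕ → ℝ := fun k => H l (z k) (q k) - H l (x k) (q k - (2 : ℝ) • (x k - y)) +
    (∑ i, B (z k) l i * w i (z k) - ∑ i, B (x k) l i * w i (x k)) -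
    B (x k) l l * (w l (z k) - w l (x k))
  have herr : Tendsto err atTop (𝓝 0) := by
    have hxq : Tendsto (fun k => q k - (2 : ℝ) • (x k - y)) atTop (𝓝 q₀) := by
      simpa using hq.sub ((hx.sub_const y).const_smul (2 : ℝ))
    have hrow := (hB.continuous_row hwc l).tendsto y
    simpa [err] using
      ((((hH l).tendsto (y, q₀)).comp (hz.prodMk_nhds hq)).sub
        (((hH l).tendsto (y, q₀)).comp (hx.prodMk_nhds hxq))).add
        ((hrow.comp hz).sub (hrow.comp hx)) |>.sub
        ((((hB.1 l l).tendsto y).comp hx).mul (((hwc l).tendsto y).comp hz |>.sub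
          (((hwc l).tendsto y).comp hx)))
  have herr_le : ∀ᶠ k in atTop, err k ≤ B y l j * (u j y - w j y) / 4 := by
    filter_upwards [hvisc, hjump] with k ⟨hzk, hxk⟩ hjk
    have hdiff : ∑ i, B (x k) l i * (u i (x k) - w i (x k)) =
        ∑ i, B (x k) l i * u i (x k) - ∑ i, B (x k) l i * w i (x k) := by
      simp only [mul_sub, Finset.sum_sub_distrib]
    have htwo := (hB.2.2 (x k)).1.sum_mul_le_of_nonneg
      (fun i => sub_nonneg.2 (hwu i (x k))) hjl
    have hdiag := mul_le_mul_of_nonneg_left (show u l (x k) - w l (x k) ≤ w l (z k) - w l (x k)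
      by linarith [hxz k]) ((hB.2.2 (x k)).1.diag_nonneg l)
    simp only [Pi.neg_apply, ← sub_eq_add_neg] at hjk
    simp only [err]
    linarith
  nlinarith [le_of_tendsto herr herr_le]

end Viscosity

theorem stmt17_general {N m : ℕ}
    (H : Fin m → Euc N → Euc N → ℝ) (hH : ∀ i, IsConvexHamiltonian (H i))
    (B : Euc N → Fin m → Fin m → ℝ) (hB : IsCouplingField B)
    (y : Euc N) (hy : y ∈ MAubry H B) (i : Fin m) :
    (∀ v ∈ Crit H B, ∀ k : Fin m, v k y = Mane H B k i y y + v i y) ∧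
    (∀ v ∈ Crit H B, ∀ w ∈ Crit H B, ∃ c : ℝ, ∀ k : Fin m, v k y - w k y = c) := by
  have : Nonempty (Fin m) := ⟨i⟩
  obtain ⟨L, hL, hlip⟩ := exists_lipschitz_of_mem_crit hH hB
  have hbdd := bddAbove_mane_image hH hB (i := i) (y := y)
  have main : ∀ v ∈ Crit H B, ∀ k, v k y = Mane H B k i y y + v i y := by
    intro v hv
    set w : Fin m → Euc N → ℝ := fun j x => v j x + -v i y
    have hw : w ∈ Crit H B := add_const_mem_crit hB hv _
    have hwu : ∀ k x, w k x ≤ Mane H B k i y x := fun k x =>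
      le_csSup (hbdd k x) ⟨v, hv, rfl⟩ |>.trans_eq' (sub_eq_add_neg _ _).symm
    have hcontact : ∀ k, Mane H B k i y y = w k y :=
      (hB.2.2 y).2.2.forall_of_closed (i := i) (by simp [w, mane_self]) fun l j hl hlj => by
        rcases eq_or_ne j l with rfl | hjl
        · exact hl
        exact eq_of_contact (fun l => (hH l).1) hB (fun k => lowerSemicontinuous_mane (hbdd k))
          (hy i).2 hw.1.1 hw.2 hL (hlip w hw l) hwu hl hjl hlj
    intro k
    linarith [hcontact k]
  exact ⟨main, fun v hv w hw => ⟨v i y - w i y, fun k => by rw [main v hv k, main w hw k]; ring⟩⟩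

/-- rigidity on the Aubry set — any two critical subsolutions
differ by a multiple of `𝟙` at each point of the Aubry set. -/
theorem stmt17 {N m : ℕ} (hN : 0 < N) (hm : 0 < m)
    (H : Fin m → Euc N → Euc N → ℝ) (hH : ∀ i, IsConvexHamiltonian (H i))
    (B : Euc N → Fin m → Fin m → ℝ) (hB : IsCouplingField B)
    (hcrit : IsLeast {a : ℝ | HasSubSol H B a} 0) (y : Euc N) (hy : y ∈ MAubry H B) (i : Fin m) :
    (∀ v ∈ Crit H B, ∀ k : Fin m, v k y = Mane H B k i y y + v i y) ∧
    (∀ v ∈ Crit H B, ∀ w ∈ Crit H B, ∃ c : ℝ, ∀ k : Fin m, v k y - w k y = c) :=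
  stmt17_general H hH B hB y hy i

end
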